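/- arXiv:2302.08886 — 2 statements merged into one kernel-verified Lean document; each statement's English description precedes it below -/
import Mathlib

section
/- Let X be a real symmetric n×n matrix with X ⪰ 0 and Tr(X) = 1. Then there exists a vector x ∈ ℝⁿ such that the (1+n)×(1+n) block matrix [[1, xᵀ],[x, X]] is positive semidefinite and eᵀx = 1 if and only if ⟨J,X⟩ ≥ 1. -/
/-!
By the Schur complement, `[[1, xᵀ], [x, X]] ⪰ 0` iff `X ⪰ x xᵀ`. Testing this against `e` gives
`(eᵀx)² ≤ eᵀXe = ⟨J, X⟩`. Conversely, if `s = eᵀXe ≥ 1`, then `x = Xe / s` works: Cauchy–Schwarz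
for the semi-inner product of `X` gives `X ⪰ (Xe)(Xe)ᵀ / s ⪰ (Xe)(Xe)ᵀ / s²`.
-/

open Matrix

/-- The `(1+n)×(1+n)` block matrix `[[1, xᵀ],[x, X]]`. -/
noncomputable def dblk {n : ℕ} (x : Fin n → ℝ) (X : Matrix (Fin n) (Fin n) ℝ) :
    Matrix (Unit ⊕ Fin n) (Unit ⊕ Fin n) ℝ :=
  Matrix.fromBlocks 1 (Matrix.of fun _ j => x j) (Matrix.of fun i _ => x i) X

namespace Matrix

variable {ι : Type*} [Fintype ι]

theorem one_dotProduct_mulVec_one {R : Type*} [NonAssocSemiring R] (X : Matrix ι ι R) :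
    1 ⬝ᵥ X *ᵥ 1 = ∑ i, ∑ j, X i j := by
  simp [mulVec, dotProduct]

theorem dotProduct_vecMulVec_self_mulVec {R : Type*} [CommSemiring R] (a z : ι → R) :
    z ⬝ᵥ vecMulVec a a *ᵥ z = (z ⬝ᵥ a) ^ 2 := by
  rw [vecMulVec_mulVec, op_smul_eq_smul, dotProduct_smul, smul_eq_mul, dotProduct_comm a, sq]

theorem PosSemidef.dotProduct_mulVec_sq_le {X : Matrix ι ι ℝ} (hX : X.PosSemidef)
    (u v : ι → ℝ) : (u ⬝ᵥ X *ᵥ v) ^ 2 ≤ (u ⬝ᵥ X *ᵥ u) * (v ⬝ᵥ X *ᵥ v) := by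
  let := X.toSeminormedAddCommGroup hX
  let := X.toInnerProductSpace hX
  have inner_eq (a b : ι → ℝ) : (inner ℝ a b : ℝ) = a ⬝ᵥ X *ᵥ b := by
    change (X *ᵥ b) ⬝ᵥ star a = _
    rw [star_trivial, dotProduct_comm]
  have h := real_inner_mul_inner_self_le u v
  rw [inner_eq, inner_eq, inner_eq] at h
  nlinarith

theorem PosSemidef.sq_dotProduct_le_of_sub_vecMulVec {X : Matrix ι ι ℝ} {x : ι → ℝ}
    (h : (X - vecMulVec x x).PosSemidef) (v : ι → ℝ) : (v ⬝ᵥ x) ^ 2 ≤ v ⬝ᵥ X *ᵥ v := by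
  have := h.dotProduct_mulVec_nonneg v
  rwa [star_trivial, sub_mulVec, dotProduct_sub, dotProduct_vecMulVec_self_mulVec, sub_nonneg]
    at this

theorem posSemidef_vecMulVec_self (a : ι → ℝ) : (vecMulVec a a).PosSemidef := by
  simpa using posSemidef_vecMulVec_self_star a

theorem PosSemidef.sub_smul_vecMulVec_mulVec {X : Matrix ι ι ℝ} (hX : X.PosSemidef)
    (v : ι → ℝ) : (X - (v ⬝ᵥ X *ᵥ v)⁻¹ • vecMulVec (X *ᵥ v) (X *ᵥ v)).PosSemidef := by
  refine .of_dotProduct_mulVec_nonneg ?_ fun z => ?_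
  · exact hX.isHermitian.sub ((posSemidef_vecMulVec_self _).isHermitian.smul (.all _))
  rw [star_trivial, sub_mulVec, smul_mulVec, dotProduct_sub, dotProduct_smul,
    dotProduct_vecMulVec_self_mulVec, smul_eq_mul, sub_nonneg]
  have hv := hX.dotProduct_mulVec_nonneg v
  rw [star_trivial] at hv
  rcases hv.eq_or_lt with hs | hs
  · simpa [← hs] using hX.dotProduct_mulVec_nonneg z
  · rw [inv_mul_le_iff₀ hs, mul_comm]
    exact hX.dotProduct_mulVec_sq_le z v

theorem PosSemidef.sub_vecMulVec_inv_smul_mulVec {X : Matrix ι ι ℝ} (hX : X.PosSemidef)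
    {v : ι → ℝ} (hv : 1 ≤ v ⬝ᵥ X *ᵥ v) :
    (X - vecMulVec ((v ⬝ᵥ X *ᵥ v)⁻¹ • X *ᵥ v) ((v ⬝ᵥ X *ᵥ v)⁻¹ • X *ᵥ v)).PosSemidef := by
  set s := v ⬝ᵥ X *ᵥ v
  have hs : 0 < s := zero_lt_one.trans_le hv
  have split : X - vecMulVec (s⁻¹ • X *ᵥ v) (s⁻¹ • X *ᵥ v) =
      (X - s⁻¹ • vecMulVec (X *ᵥ v) (X *ᵥ v)) +
        (s⁻¹ - s⁻¹ ^ 2) • vecMulVec (X *ᵥ v) (X *ᵥ v) := by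
    ext i j
    simp only [sub_apply, add_apply, smul_apply, Pi.smul_apply, vecMulVec_apply, smul_eq_mul]
    ring
  rw [split]
  refine (hX.sub_smul_vecMulVec_mulVec v).add ((posSemidef_vecMulVec_self _).smul ?_)
  rw [sub_nonneg, sq]
  exact mul_le_of_le_one_left (inv_nonneg.2 hs.le) (inv_le_one_of_one_le₀ hv)

end Matrix

theorem dblk_posSemidef_iff {n : ℕ} (x : Fin n → ℝ) (X : Matrix (Fin n) (Fin n) ℝ) :
    (dblk x X).PosSemidef ↔ (X - vecMulVec x x).PosSemidef := by
  have hB : (of fun (_ : Unit) j => x j)ᴴ = of fun i (_ : Unit) => x i := by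
    ext; simp
  let : Invertible (1 : Matrix Unit Unit ℝ) := invertibleOne
  rw [dblk, ← hB, PosDef.one.fromBlocks₁₁, hB]
  congr! 2
  ext i j
  simp [mul_apply, vecMulVec_apply]

theorem stmt11_general {n : ℕ} (X : Matrix (Fin n) (Fin n) ℝ)
    (hX : X.PosSemidef) :
    (∃ x : Fin n → ℝ, (dblk x X).PosSemidef ∧ (∑ i, x i) = 1) ↔
      1 ≤ ∑ i, ∑ j, X i j := by
  simp_rw [← one_dotProduct_mulVec_one, dblk_posSemidef_iff, ← one_dotProduct]
  constructor
  · rintro ⟨x, hx, hsum⟩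
    simpa [hsum] using hx.sq_dotProduct_le_of_sub_vecMulVec 1
  · intro hs
    refine ⟨_, hX.sub_vecMulVec_inv_smul_mulVec hs, ?_⟩
    rw [dotProduct_smul, smul_eq_mul, inv_mul_cancel₀ (zero_lt_one.trans_le hs).ne']

/-- for a real symmetric `n×n` matrix `X ⪰ 0` with `Tr(X) = 1`, there is a
vector `x` with `[[1,xᵀ],[x,X]] ⪰ 0` and `eᵀx = 1` if and only if `⟨J,X⟩ ≥ 1`. -/
theorem stmt11 {n : ℕ} (X : Matrix (Fin n) (Fin n) ℝ)
    (hX : X.PosSemidef) (htr : X.trace = 1) :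
    (∃ x : Fin n → ℝ, (dblk x X).PosSemidef ∧ (∑ i, x i) = 1) ↔
      1 ≤ ∑ i, ∑ j, X i j :=
  stmt11_general X hX
end

section
/- Let Γ be a finite group with n := |Γ|, let k denote the minimum dimension of a non-trivial complex representation of Γ, let A ⊆ Γ be a product-free set, and let λ₂ denote the second largest eigenvalue of the adjacency matrix of the bipartite Cayley graph G_{Γ,A}. Then λ₂ ≤ √(|A|·(n − |A|)/k). -/
/-!
`G_{Γ,A}` is `|A|`-regular and bipartite, so its eigenvalues are at most `|A|`, its spectrum is
symmetric about `0`, `±|A|` are eigenvalues, and the squares of all `2n` eigenvalues add up to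
`tr B² = 2n|A|`. The map `(u, v) ↦ (u g, g⁻¹ v)` preserves the products `u v`, so `Γ` acts on every
eigenspace. For an eigenvalue `t > 0` the zero-sum vectors of the `t`-eigenspace contain no nonzero
invariant vector, so they carry a nontrivial representation and have dimension at least `k`.
Hence `λ₂ > 0` has multiplicity at least `k` (at least `k + 1` if `λ₂ = |A|`, the constant vector
being an extra eigenvector), and so has `-λ₂`; comparing with the sum of squares gives
`2|A|² + 2kλ₂² ≤ 2n|A|`.
-/

open Finset Matrix

/-- The bipartite Cayley graph `G_{Γ,A}`: two disjoint copies of `Γ`, with `u` in the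
first copy adjacent to `v` in the second copy iff `u·v ∈ A`. -/
def cayleyBip (Γ : Type*) [Group Γ] (A : Finset Γ) : SimpleGraph (Γ ⊕ Γ) where
  Adj x y := (∃ u v, x = Sum.inl u ∧ y = Sum.inr v ∧ u * v ∈ A) ∨
             (∃ u v, x = Sum.inr v ∧ y = Sum.inl u ∧ u * v ∈ A)
  symm := by
    constructor
    rintro x y (⟨u, v, rfl, rfl, huv⟩ | ⟨u, v, rfl, rfl, huv⟩)
    · exact Or.inr ⟨u, v, rfl, rfl, huv⟩
    · exact Or.inl ⟨u, v, rfl, rfl, huv⟩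
  loopless := by
    constructor
    rintro x (⟨u, v, h1, h2, _⟩ | ⟨u, v, h1, h2, _⟩) <;> subst h1 <;> simp_all

instance {Γ : Type*} [Group Γ] [Fintype Γ] [DecidableEq Γ] (A : Finset Γ) :
    DecidableRel (cayleyBip Γ A).Adj := fun x y =>
  inferInstanceAs (Decidable ((∃ u v, x = Sum.inl u ∧ y = Sum.inr v ∧ u * v ∈ A) ∨
    (∃ u v, x = Sum.inr v ∧ y = Sum.inl u ∧ u * v ∈ A)))

lemma adjHerm {W : Type*} [Fintype W] [DecidableEq W] (G : SimpleGraph W)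
    [DecidableRel G.Adj] : (G.adjMatrix ℝ).IsHermitian := by
  rw [Matrix.IsHermitian, Matrix.conjTranspose_eq_transpose_of_trivial]
  exact G.isSymm_adjMatrix

/-- The list of eigenvalues of a Hermitian matrix, with multiplicities,
sorted in nondecreasing order. -/
noncomputable def eigList {W : Type*} [Fintype W] [DecidableEq W] (M : Matrix W W ℝ)
    (hM : M.IsHermitian) : List ℝ :=
  (Finset.univ.val.map hM.eigenvalues).sort (· ≤ ·)

/-- The second largest eigenvalue (with multiplicities) of a Hermitian matrix. -/
noncomputable def secondLargest {W : Type*} [Fintype W] [DecidableEq W] (M : Matrix W W ℝ)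
    (hM : M.IsHermitian) : ℝ :=
  (eigList M hM).getD (Fintype.card W - 2) 0

/-- The minimum dimension of a non-trivial complex representation of `Γ`. -/
noncomputable def minNontrivRepDim (Γ : Type*) [Group Γ] : ℕ :=
  sInf {d : ℕ | ∃ ρ : Γ →* Matrix.GeneralLinearGroup (Fin d) ℂ, ∃ g : Γ, ρ g ≠ 1}

open Module End SimpleGraph

theorem Finset.sum_card_filter_mul_sq_le {ι : Type*} [Fintype ι] (f : ι → ℝ) (T : Finset ℝ) :
    ∑ t ∈ T, (#{i | f i = t} : ℝ) * t ^ 2 ≤ ∑ i, f i ^ 2 :=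
  calc ∑ t ∈ T, (#{i | f i = t} : ℝ) * t ^ 2 = ∑ t ∈ T, ∑ i with f i = t, t ^ 2 := by
        simp only [sum_const, nsmul_eq_mul]
    _ = ∑ i with f i ∈ T, f i ^ 2 := sum_fiberwise_eq_sum_filter' _ _ _ _
    _ ≤ ∑ i, f i ^ 2 :=
        sum_le_sum_of_subset_of_nonneg (filter_subset _ _) fun _ _ _ => sq_nonneg _

theorem Submodule.finrank_le_finrank_inf_ker_add_one {K V : Type*} [Field K] [AddCommGroup V]
    [Module K V] [FiniteDimensional K V] (p : Submodule K V) (f : V →ₗ[K] K) :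
    finrank K p ≤ finrank K ↥(p ⊓ LinearMap.ker f) + 1 := by
  have hrange : finrank K (LinearMap.range (f.domRestrict p)) ≤ 1 :=
    (Submodule.finrank_le _).trans (Module.finrank_self K).le
  have hker :
      finrank K (LinearMap.ker (f.domRestrict p)) = finrank K ↥(p ⊓ LinearMap.ker f) := by
    rw [LinearMap.ker_domRestrict, ← Submodule.finrank_map_subtype_eq,
      Submodule.map_comap_subtype]
  have := (f.domRestrict p).finrank_range_add_finrank_ker
  omega

section Eigenspaces

variable {K n : Type*} [Field K] [Fintype n] [DecidableEq n]

theorem Matrix.IsSymm.dotProduct_eq_zero_of_mem_eigenspace {B : Matrix n n K} (hB : B.IsSymm)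
    {s t : K} (hst : s ≠ t) {v w : n → K} (hv : v ∈ eigenspace (toLin' B) s)
    (hw : w ∈ eigenspace (toLin' B) t) : v ⬝ᵥ w = 0 := by
  rw [mem_eigenspace_iff, toLin'_apply] at hv hw
  have h : s * (v ⬝ᵥ w) = t * (v ⬝ᵥ w) := by
    rw [← smul_eq_mul, ← smul_dotProduct, ← hv, ← smul_eq_mul, ← dotProduct_smul, ← hw,
      dotProduct_mulVec, ← vecMul_transpose, hB.eq]
  exact (mul_eq_zero.mp (sub_mul s t _ ▸ sub_eq_zero.mpr h)).resolve_left (sub_ne_zero.mpr hst)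

theorem Matrix.finrank_eigenspace_le_neg {B D : Matrix n n K} (hD : D * D = 1)
    (hBD : B * D = -(D * B)) (t : K) :
    finrank K (eigenspace (toLin' B) t) ≤ finrank K (eigenspace (toLin' B) (-t)) := by
  have hmaps : ∀ v ∈ eigenspace (toLin' B) t, toLin' D v ∈ eigenspace (toLin' B) (-t) := by
    intro v hv
    rw [mem_eigenspace_iff, toLin'_apply] at hv ⊢
    rw [toLin'_apply, mulVec_mulVec, hBD, neg_mulVec, ← mulVec_mulVec, hv, mulVec_smul, neg_smul]
  refine LinearMap.finrank_le_finrank_of_injective (f := (toLin' D).restrict hmaps) ?_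
  intro v w hvw
  have h := congrArg (D *ᵥ ·) (congrArg Subtype.val hvw)
  simp only [LinearMap.coe_restrict_apply, toLin'_apply, mulVec_mulVec, hD, one_mulVec] at h
  exact Subtype.ext h

end Eigenspaces

namespace Matrix.IsHermitian

variable {n : Type*} [Fintype n] [DecidableEq n] {A : Matrix n n ℝ}

theorem card_filter_eigenvalues_eq_finrank (hA : A.IsHermitian) (t : ℝ) :
    #{i | hA.eigenvalues i = t} = finrank ℝ (eigenspace (toLin' A) t) := by
  let e : EuclideanSpace ℝ n ≃ₗ[ℝ] (n → ℝ) := WithLp.linearEquiv 2 ℝ (n → ℝ)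
  have heig : (eigenspace (toLin' A) t).map (e.symm : (n → ℝ) →ₗ[ℝ] EuclideanSpace ℝ n) =
      eigenspace (toEuclideanLin A) t := by
    ext x
    rw [Submodule.map_equiv_eq_comap_symm, Submodule.mem_comap, mem_eigenspace_iff,
      mem_eigenspace_iff, ← e.injective.eq_iff]
    simp [e, toLpLin_apply]
  calc #{i | hA.eigenvalues i = t}
      = #{j | hA.eigenvalues₀ j = t} :=
        card_equiv (Fintype.equivOfCardEq (Fintype.card_fin _)).symm
          fun i => by simp only [mem_filter, mem_univ, true_and]; rfl
    _ = finrank ℝ (eigenspace (toEuclideanLin A) t) :=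
        (isSymmetric_toEuclideanLin_iff.mpr hA).card_filter_eigenvalues_eq
          finrank_euclideanSpace t
    _ = finrank ℝ (eigenspace (toLin' A) t) :=
        (LinearEquiv.ofSubmodules e.symm _ _ heig).finrank_eq.symm

theorem hasEigenvalue_eigenvalues (hA : A.IsHermitian) (i : n) :
    HasEigenvalue (toLin' A) (hA.eigenvalues i) := by
  rw [hasEigenvalue_iff_mem_spectrum, spectrum_toLin']
  exact hA.eigenvalues_mem_spectrum_real i

theorem sum_sq_eigenvalues (hA : A.IsHermitian) : ∑ i, hA.eigenvalues i ^ 2 = (A * A).trace := by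
  set U : Matrix n n ℝ := (hA.eigenvectorUnitary : Matrix n n ℝ)
  set D : Matrix n n ℝ := diagonal hA.eigenvalues
  have hU : star U * U = 1 := Unitary.coe_star_mul_self hA.eigenvectorUnitary
  have hA' : A = U * D * star U := by
    simpa [Unitary.conjStarAlgAut_apply] using hA.spectral_theorem
  have hAA : A * A = U * (D * D * star U) := by
    conv_lhs => rw [hA']
    simp only [mul_assoc]
    rw [← mul_assoc (star U) U, hU, one_mul]
  rw [hAA, trace_mul_comm, mul_assoc, hU, mul_one]
  simp [D, diagonal_mul_diagonal, trace_diagonal, sq]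

end Matrix.IsHermitian

section SecondLargest

variable {W : Type*} [Fintype W] [DecidableEq W] {M : Matrix W W ℝ} (hM : M.IsHermitian)

theorem length_eigList : (eigList M hM).length = Fintype.card W := by
  simp [eigList, Multiset.length_sort]

theorem countP_eigList (p : ℝ → Prop) [DecidablePred p] :
    (eigList M hM).countP p = #{i | p (hM.eigenvalues i)} := by
  rw [← Multiset.coe_countP, eigList, Multiset.sort_eq, Multiset.countP_map, card_def,
    filter_val]

theorem exists_eigenvalues_eq_secondLargest [Nonempty W] :
    ∃ i, hM.eigenvalues i = secondLargest M hM := by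
  have hlt : Fintype.card W - 2 < (eigList M hM).length := by
    rw [length_eigList]
    have := Fintype.card_pos (α := W)
    omega
  rw [secondLargest, List.getD_eq_getElem _ _ hlt]
  obtain ⟨i, -, hi⟩ := Multiset.mem_map.mp ((Multiset.mem_sort _).mp (List.getElem_mem hlt))
  exact ⟨i, hi⟩

theorem two_le_card_filter_secondLargest_le (h : 2 ≤ Fintype.card W) :
    2 ≤ #{i | secondLargest M hM ≤ hM.eigenvalues i} := by
  set l := eigList M hM
  have hlt : Fintype.card W - 2 < l.length := by rw [length_eigList]; omega
  have hsorted := List.pairwise_iff_getElem.mp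
    (Multiset.pairwise_sort _ (· ≤ ·) : l.Pairwise (· ≤ ·))
  have htail : ∀ a ∈ l.drop (Fintype.card W - 2), secondLargest M hM ≤ a := by
    intro a ha
    obtain ⟨j, hj, rfl⟩ := List.mem_drop_iff_getElem.mp ha
    rw [secondLargest, List.getD_eq_getElem _ _ hlt]
    rcases Nat.eq_zero_or_pos j with rfl | hj0
    · exact le_rfl
    · exact hsorted _ _ hlt _ (by omega)
  calc 2 = (l.drop (Fintype.card W - 2)).countP (secondLargest M hM ≤ ·) := by
        rw [List.countP_eq_length.mpr fun a ha => decide_eq_true (htail a ha), List.length_drop,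
          length_eigList]
        omega
    _ ≤ l.countP (secondLargest M hM ≤ ·) := (List.drop_sublist _ _).countP_le
    _ = _ := countP_eigList hM _

end SecondLargest

namespace SimpleGraph

section Regular

variable {V : Type*} [Fintype V] [DecidableEq V] {G : SimpleGraph V} [DecidableRel G.Adj] {d : ℕ}

theorem IsRegularOfDegree.le_of_hasEigenvalue (hd : G.IsRegularOfDegree d) {t : ℝ}
    (ht : HasEigenvalue (toLin' (G.adjMatrix ℝ)) t) : t ≤ d := by
  obtain ⟨k, hk⟩ := eigenvalue_mem_ball ht
  have hrow : ∑ j ∈ univ.erase k, ‖G.adjMatrix ℝ k j‖ = d := by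
    rw [sum_erase _ (by simp), ← hd.degree_eq k]
    simp [adjMatrix_apply, apply_ite, sum_boole, ← card_neighborFinset_eq_degree,
      neighborFinset_eq_filter]
  rw [Metric.mem_closedBall, hrow, adjMatrix_apply, if_neg (G.loopless.irrefl k), Real.dist_eq,
    sub_zero] at hk
  exact (le_abs_self t).trans hk

theorem IsRegularOfDegree.one_mem_eigenspace (hd : G.IsRegularOfDegree d) :
    (1 : V → ℝ) ∈ eigenspace (toLin' (G.adjMatrix ℝ)) d := by
  rw [mem_eigenspace_iff, toLin'_apply]
  ext v
  simpa using adjMatrix_mulVec_const_apply_of_regular (α := ℝ) (a := 1) hd (v := v)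

theorem IsRegularOfDegree.one_dotProduct_eq_zero (hd : G.IsRegularOfDegree d) {t : ℝ}
    (ht : t ≠ d) {w : V → ℝ} (hw : w ∈ eigenspace (toLin' (G.adjMatrix ℝ)) t) :
    1 ⬝ᵥ w = 0 :=
  G.isSymm_adjMatrix.dotProduct_eq_zero_of_mem_eigenspace (Ne.symm ht) hd.one_mem_eigenspace hw

theorem IsRegularOfDegree.sum_sq_eigenvalues (hd : G.IsRegularOfDegree d)
    (hA : (G.adjMatrix ℝ).IsHermitian) : ∑ i, hA.eigenvalues i ^ 2 = Fintype.card V * d := by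
  simp only [hA.sum_sq_eigenvalues, trace, diag_apply, adjMatrix_mul_self_apply_self,
    hd.degree_eq, sum_const, card_univ, nsmul_eq_mul]

end Regular

/-- Conjugating by the diagonal matrix with entries `1` on `V` and `-1` on `W` negates the
adjacency matrix of a graph without edges inside `V` or inside `W`. -/
theorem finrank_eigenspace_adjMatrix_le_neg {V W : Type*} [Fintype V] [DecidableEq V]
    [Fintype W] [DecidableEq W] (G : SimpleGraph (V ⊕ W)) [DecidableRel G.Adj]
    (hl : ∀ a b, ¬ G.Adj (.inl a) (.inl b)) (hr : ∀ a b, ¬ G.Adj (.inr a) (.inr b)) (t : ℝ) :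
    finrank ℝ (eigenspace (toLin' (G.adjMatrix ℝ)) t) ≤
      finrank ℝ (eigenspace (toLin' (G.adjMatrix ℝ)) (-t)) := by
  refine finrank_eigenspace_le_neg (D := diagonal (Sum.elim 1 (-1))) ?_ ?_ t
  · rw [diagonal_mul_diagonal, ← diagonal_one]
    congr 1
    ext (x | x) <;> simp
  · ext (x | x) (y | y) <;>
      simp only [mul_diagonal, diagonal_mul, Matrix.neg_apply, adjMatrix_apply, hl, hr,
        G.adj_comm (.inr _), Sum.elim_inl, Sum.elim_inr, Pi.one_apply, Pi.neg_apply, ↓reduceIte,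
        mul_one, mul_neg, mul_zero, neg_zero, neg_mul, one_mul, neg_neg]

end SimpleGraph

section RepresentationDimension

variable {Γ W : Type*} [Group Γ] [AddCommGroup W] [Module ℝ W] [FiniteDimensional ℝ W]

theorem Representation.exists_complex_matrix_ne_one (ρ : Representation ℝ Γ W) {g : Γ}
    (hg : ρ g ≠ 1) :
    ∃ σ : Γ →* GeneralLinearGroup (Fin (finrank ℝ W)) ℂ, ∃ g : Γ, σ g ≠ 1 := by
  let f : Module.End ℝ W →* Matrix (Fin (finrank ℝ W)) (Fin (finrank ℝ W)) ℂ :=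
    (algebraMap ℝ ℂ).mapMatrix.toMonoidHom.comp
      (LinearMap.toMatrixAlgEquiv (Module.finBasis ℝ W)).toMonoidHom
  have hf : Function.Injective f :=
    (Matrix.map_injective (algebraMap ℝ ℂ).injective).comp (AlgEquiv.injective _)
  refine ⟨(Units.map f).comp ρ.asGroupHom, g, fun h => hg (hf ?_)⟩
  simpa [Units.ext_iff, Representation.asGroupHom_apply] using h

theorem minNontrivRepDim_le_finrank (ρ : Representation ℝ Γ W) {g : Γ} (hg : ρ g ≠ 1) :
    minNontrivRepDim Γ ≤ finrank ℝ W :=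
  Nat.sInf_le (ρ.exists_complex_matrix_ne_one hg)

theorem minNontrivRepDim_pos (ρ : Representation ℝ Γ W) {g : Γ} (hg : ρ g ≠ 1) :
    0 < minNontrivRepDim Γ := by
  rw [minNontrivRepDim, Nat.pos_iff_ne_zero, Ne, Nat.sInf_eq_zero, not_or]
  refine ⟨?_, Set.nonempty_iff_ne_empty.mp ⟨_, ρ.exists_complex_matrix_ne_one hg⟩⟩
  rintro ⟨σ, g, hσ⟩
  exact hσ (Subsingleton.elim _ _)

end RepresentationDimension

section CayleyGraph

variable {Γ : Type*} [Group Γ] (A : Finset Γ)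

@[simp]
theorem cayleyBip_adj_inl_inr {u v : Γ} :
    (cayleyBip Γ A).Adj (.inl u) (.inr v) ↔ u * v ∈ A := by
  simp [cayleyBip]

@[simp]
theorem cayleyBip_adj_inr_inl {u v : Γ} :
    (cayleyBip Γ A).Adj (.inr v) (.inl u) ↔ u * v ∈ A := by
  simp [cayleyBip]

@[simp]
theorem not_cayleyBip_adj_inl_inl {u u' : Γ} : ¬ (cayleyBip Γ A).Adj (.inl u) (.inl u') := by
  simp [cayleyBip]

@[simp]
theorem not_cayleyBip_adj_inr_inr {v v' : Γ} : ¬ (cayleyBip Γ A).Adj (.inr v) (.inr v') := by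
  simp [cayleyBip]

def cayleyShift (g : Γ) : Γ ⊕ Γ ≃ Γ ⊕ Γ :=
  Equiv.sumCongr (Equiv.mulRight g) (Equiv.mulLeft g⁻¹)

theorem cayleyBip_adj_cayleyShift (g : Γ) {x y : Γ ⊕ Γ} :
    (cayleyBip Γ A).Adj (cayleyShift g x) (cayleyShift g y) ↔ (cayleyBip Γ A).Adj x y := by
  rcases x with u | v <;> rcases y with u' | v' <;> simp [cayleyShift, mul_assoc]

theorem eq_sumElim_of_forall_comp_cayleyShift {w : Γ ⊕ Γ → ℝ}
    (hw : ∀ g, w ∘ cayleyShift g = w) :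
    w = Sum.elim (fun _ => w (.inl 1)) (fun _ => w (.inr 1)) := by
  ext (u | v)
  · simpa [cayleyShift] using congrFun (hw u) (.inl 1)
  · simpa [cayleyShift] using congrFun (hw v⁻¹) (.inr 1)

variable [Fintype Γ] [DecidableEq Γ]

theorem cayleyBip_mulVec_sumElim_const (a b : ℝ) :
    (cayleyBip Γ A).adjMatrix ℝ *ᵥ Sum.elim (fun _ => a) (fun _ => b) =
      Sum.elim (fun _ => #A * b) (fun _ => #A * a) := by
  ext (u | v) <;>
    simp only [mulVec, dotProduct, Fintype.sum_sum_type, adjMatrix_apply, cayleyBip_adj_inl_inr,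
      cayleyBip_adj_inr_inl, not_cayleyBip_adj_inl_inl, not_cayleyBip_adj_inr_inr, if_false,
      zero_mul, sum_const_zero, zero_add, add_zero, ite_mul, one_mul, Sum.elim_inl, Sum.elim_inr]
  · refine (Fintype.sum_equiv (Equiv.mulLeft u) _ (fun z => if z ∈ A then b else 0)
      fun _ => if_congr Iff.rfl rfl rfl).trans ?_
    rw [sum_ite_mem, univ_inter, sum_const, nsmul_eq_mul]
  · refine (Fintype.sum_equiv (Equiv.mulRight v) _ (fun z => if z ∈ A then a else 0)
      fun _ => if_congr Iff.rfl rfl rfl).trans ?_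
    rw [sum_ite_mem, univ_inter, sum_const, nsmul_eq_mul]

theorem cayleyBip_isRegularOfDegree : (cayleyBip Γ A).IsRegularOfDegree #A := by
  intro x
  have h := congrFun (cayleyBip_mulVec_sumElim_const A 1 1) x
  rw [show Sum.elim (fun _ : Γ => (1 : ℝ)) (fun _ => 1) = Function.const _ 1 from
    Sum.elim_const_const 1, adjMatrix_mulVec_const_apply] at h
  rcases x with u | v <;> simpa using h

variable (Γ) in
def shiftRep : Representation ℝ Γ (Γ ⊕ Γ → ℝ) where
  toFun g := LinearMap.funLeft ℝ ℝ (cayleyShift g)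
  map_one' := by
    ext w (u | v) <;> simp [cayleyShift]
  map_mul' g h := by
    ext w (u | v) <;> simp [cayleyShift, mul_assoc]

theorem shiftRep_apply (g : Γ) (w : Γ ⊕ Γ → ℝ) : shiftRep Γ g w = w ∘ cayleyShift g := rfl

theorem comp_cayleyShift_mem_eigenspace {t : ℝ} {w : Γ ⊕ Γ → ℝ}
    (hw : w ∈ eigenspace (toLin' ((cayleyBip Γ A).adjMatrix ℝ)) t) (g : Γ) :
    w ∘ cayleyShift g ∈ eigenspace (toLin' ((cayleyBip Γ A).adjMatrix ℝ)) t := by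
  rw [mem_eigenspace_iff, toLin'_apply] at hw ⊢
  have hB : ((cayleyBip Γ A).adjMatrix ℝ).submatrix (cayleyShift g) (cayleyShift g) =
      (cayleyBip Γ A).adjMatrix ℝ := by
    ext x y
    simp [adjMatrix_apply, cayleyBip_adj_cayleyShift]
  rw [← hB, submatrix_mulVec_equiv, Function.comp_assoc, Equiv.self_comp_symm, Function.comp_id,
    hw]
  rfl

def zeroSumEigenSubrep (t : ℝ) : Subrepresentation (shiftRep Γ) where
  toSubmodule := eigenspace (toLin' ((cayleyBip Γ A).adjMatrix ℝ)) t ⊓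
    LinearMap.ker (dotProductBilin ℝ ℝ (1 : Γ ⊕ Γ → ℝ))
  apply_mem_toSubmodule g w hw := by
    obtain ⟨hE, hsum⟩ := Submodule.mem_inf.mp hw
    refine Submodule.mem_inf.mpr ⟨comp_cayleyShift_mem_eigenspace A hE g, ?_⟩
    simpa [one_dotProduct, shiftRep_apply, Equiv.sum_comp] using hsum

/-- An invariant vector is constant on each side, say `(a, b)`; a zero sum forces `b = -a`, and
then the eigenvalue equation `t a = |A| b` forces `a = 0`. -/
theorem eq_zero_of_mem_zeroSumEigenSubrep {t : ℝ} (ht : t ≠ -#A) {w : Γ ⊕ Γ → ℝ}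
    (hw : w ∈ (zeroSumEigenSubrep A t).toSubmodule) (hinv : ∀ g, w ∘ cayleyShift g = w) :
    w = 0 := by
  obtain ⟨hE, hsum⟩ := Submodule.mem_inf.mp hw
  have hw' := eq_sumElim_of_forall_comp_cayleyShift hinv
  generalize w (.inl 1) = a, w (.inr 1) = b at hw'
  subst hw'
  rw [mem_eigenspace_iff, toLin'_apply, cayleyBip_mulVec_sumElim_const] at hE
  have hl := congrFun hE (.inl 1)
  simp only [Sum.elim_inl, Pi.smul_apply, smul_eq_mul] at hl
  rw [LinearMap.mem_ker, dotProductBilin_apply_apply, one_dotProduct, Fintype.sum_sum_type] at hsum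
  simp only [Sum.elim_inl, Sum.elim_inr, sum_const, card_univ, nsmul_eq_mul, ← mul_add] at hsum
  obtain rfl : b = -a := by
    have := (mul_eq_zero.mp hsum).resolve_left (by positivity)
    linarith
  obtain rfl : a = 0 := by
    have : (t + #A) * a = 0 := by linarith
    exact (mul_eq_zero.mp this).resolve_left fun h => ht (by linarith)
  ext (u | v) <;> simp

theorem exists_zeroSumEigenSubrep_toRepresentation_ne_one {t : ℝ} (ht : t ≠ -#A)
    (hW : (zeroSumEigenSubrep A t).toSubmodule ≠ ⊥) :
    ∃ g, (zeroSumEigenSubrep A t).toRepresentation g ≠ 1 := by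
  by_contra! h
  refine hW <| (Submodule.eq_bot_iff _).mpr fun w hw =>
    eq_zero_of_mem_zeroSumEigenSubrep A ht hw fun g => ?_
  exact congrArg Subtype.val (LinearMap.congr_fun (h g) ⟨w, hw⟩)

theorem minNontrivRepDim_le_finrank_zeroSumEigenSubrep {t : ℝ} (ht : 0 < t)
    (hW : (zeroSumEigenSubrep A t).toSubmodule ≠ ⊥) :
    minNontrivRepDim Γ ≤ finrank ℝ (zeroSumEigenSubrep A t).toSubmodule ∧
      0 < minNontrivRepDim Γ := by
  have htA : t ≠ -#A := ((neg_nonpos.mpr (Nat.cast_nonneg _)).trans_lt ht).ne'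
  obtain ⟨g, hg⟩ := exists_zeroSumEigenSubrep_toRepresentation_ne_one A htA hW
  exact ⟨minNontrivRepDim_le_finrank _ hg, minNontrivRepDim_pos _ hg⟩

end CayleyGraph

section CayleySpectrum

variable {Γ : Type*} [Group Γ] [Fintype Γ] [DecidableEq Γ] (A : Finset Γ)

theorem cayleyBip_eigenvalues_le (i : Γ ⊕ Γ) : (adjHerm (cayleyBip Γ A)).eigenvalues i ≤ #A :=
  (cayleyBip_isRegularOfDegree A).le_of_hasEigenvalue (IsHermitian.hasEigenvalue_eigenvalues _ i)

theorem sum_sq_cayleyBip_eigenvalues :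
    ∑ i, (adjHerm (cayleyBip Γ A)).eigenvalues i ^ 2 = 2 * Fintype.card Γ * #A := by
  rw [(cayleyBip_isRegularOfDegree A).sum_sq_eigenvalues, Fintype.card_sum]
  push_cast
  ring

theorem card_cayleyBip_eigenvalues_eq_le_neg (t : ℝ) :
    #{i | (adjHerm (cayleyBip Γ A)).eigenvalues i = t} ≤
      #{i | (adjHerm (cayleyBip Γ A)).eigenvalues i = -t} := by
  simp only [IsHermitian.card_filter_eigenvalues_eq_finrank]
  exact finrank_eigenspace_adjMatrix_le_neg _ (by simp) (by simp) t

theorem one_le_card_cayleyBip_eigenvalues_eq_card :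
    1 ≤ #{i | (adjHerm (cayleyBip Γ A)).eigenvalues i = #A} := by
  rw [IsHermitian.card_filter_eigenvalues_eq_finrank, Submodule.one_le_finrank_iff,
    Submodule.ne_bot_iff]
  exact ⟨1, (cayleyBip_isRegularOfDegree A).one_mem_eigenspace, one_ne_zero⟩

theorem minNontrivRepDim_le_card_cayleyBip_eigenvalues_eq {t : ℝ} (ht : 0 < t) (htA : t ≠ #A)
    (h : ∃ i, (adjHerm (cayleyBip Γ A)).eigenvalues i = t) :
    minNontrivRepDim Γ ≤ #{i | (adjHerm (cayleyBip Γ A)).eigenvalues i = t} ∧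
      0 < minNontrivRepDim Γ := by
  obtain ⟨i, rfl⟩ := h
  have hW : (zeroSumEigenSubrep A _).toSubmodule =
      eigenspace (toLin' ((cayleyBip Γ A).adjMatrix ℝ)) _ :=
    inf_eq_left.mpr fun w hw => (cayleyBip_isRegularOfDegree A).one_dotProduct_eq_zero htA hw
  have hE := (adjHerm (cayleyBip Γ A)).hasEigenvalue_eigenvalues i
  rw [hasEigenvalue_iff, ← hW] at hE
  rw [IsHermitian.card_filter_eigenvalues_eq_finrank, ← hW]
  exact minNontrivRepDim_le_finrank_zeroSumEigenSubrep A ht hE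

/-- The constant vector `1` spans the part of the `|A|`-eigenspace outside the zero-sum
subrepresentation, so a multiple eigenvalue `|A|` leaves that subrepresentation nonzero. -/
theorem minNontrivRepDim_lt_card_cayleyBip_eigenvalues_eq_card (hA : 0 < (#A : ℝ))
    (h2 : 2 ≤ #{i | (adjHerm (cayleyBip Γ A)).eigenvalues i = #A}) :
    minNontrivRepDim Γ < #{i | (adjHerm (cayleyBip Γ A)).eigenvalues i = #A} ∧
      0 < minNontrivRepDim Γ := by
  rw [IsHermitian.card_filter_eigenvalues_eq_finrank] at h2 ⊢
  set W := (zeroSumEigenSubrep A #A).toSubmodule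
  have hone : (1 : Γ ⊕ Γ → ℝ) ∉ W := fun h => by
    simpa [one_dotProduct] using (Submodule.mem_inf.mp h).2
  have hlt : finrank ℝ W < finrank ℝ (eigenspace (toLin' ((cayleyBip Γ A).adjMatrix ℝ)) #A) :=
    Submodule.finrank_lt_finrank_of_lt <| SetLike.lt_iff_le_and_exists.mpr
      ⟨inf_le_left, 1, (cayleyBip_isRegularOfDegree A).one_mem_eigenspace, hone⟩
  have hle : _ ≤ finrank ℝ W + 1 := Submodule.finrank_le_finrank_inf_ker_add_one
    (eigenspace (toLin' ((cayleyBip Γ A).adjMatrix ℝ)) #A) (dotProductBilin ℝ ℝ 1)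
  have hW : W ≠ ⊥ := fun h => by
    rw [← Submodule.finrank_eq_zero] at h
    omega
  obtain ⟨hk, hk0⟩ := minNontrivRepDim_le_finrank_zeroSumEigenSubrep A hA hW
  exact ⟨hk.trans_lt hlt, hk0⟩

theorem minNontrivRepDim_mul_sq_add_sq_le_of_lt {t : ℝ} (ht : 0 < t) (htA : t < #A)
    (h : ∃ i, (adjHerm (cayleyBip Γ A)).eigenvalues i = t) :
    (minNontrivRepDim Γ : ℝ) * t ^ 2 + (#A : ℝ) ^ 2 ≤ Fintype.card Γ * #A ∧
      0 < minNontrivRepDim Γ := by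
  obtain ⟨hk, hk0⟩ := minNontrivRepDim_le_card_cayleyBip_eigenvalues_eq A ht htA.ne h
  have hk' : (minNontrivRepDim Γ : ℝ) ≤ #{i | (adjHerm (cayleyBip Γ A)).eigenvalues i = t} := by
    exact_mod_cast hk
  have hA1 : (1 : ℝ) ≤ #{i | (adjHerm (cayleyBip Γ A)).eigenvalues i = #A} := by
    exact_mod_cast one_le_card_cayleyBip_eigenvalues_eq_card A
  have hflip (s : ℝ) := Nat.cast_le (α := ℝ) |>.mpr (card_cayleyBip_eigenvalues_eq_le_neg A s)
  have hbound := sum_card_filter_mul_sq_le (adjHerm (cayleyBip Γ A)).eigenvalues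
    {t, -t, (#A : ℝ), -(#A : ℝ)}
  rw [sum_insert (by simp only [mem_insert, mem_singleton]; rintro (h | h | h) <;> linarith),
    sum_insert (by simp only [mem_insert, mem_singleton]; rintro (h | h) <;> linarith),
    sum_pair (by linarith), sum_sq_cayleyBip_eigenvalues, neg_sq, neg_sq] at hbound
  refine ⟨?_, hk0⟩
  linarith [mul_le_mul_of_nonneg_right hk' (sq_nonneg t),
    mul_le_mul_of_nonneg_right (hflip t) (sq_nonneg t),
    mul_le_mul_of_nonneg_right hA1 (sq_nonneg (#A : ℝ)),
    mul_le_mul_of_nonneg_right (hflip #A) (sq_nonneg (#A : ℝ))]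

theorem minNontrivRepDim_add_one_mul_sq_le (hA : 0 < (#A : ℝ))
    (h2 : 2 ≤ #{i | (adjHerm (cayleyBip Γ A)).eigenvalues i = #A}) :
    ((minNontrivRepDim Γ : ℝ) + 1) * (#A : ℝ) ^ 2 ≤ Fintype.card Γ * #A ∧
      0 < minNontrivRepDim Γ := by
  obtain ⟨hk, hk0⟩ := minNontrivRepDim_lt_card_cayleyBip_eigenvalues_eq_card A hA h2
  have hk' : (minNontrivRepDim Γ : ℝ) + 1 ≤
      #{i | (adjHerm (cayleyBip Γ A)).eigenvalues i = #A} := by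
    exact_mod_cast hk
  have hflip := Nat.cast_le (α := ℝ) |>.mpr (card_cayleyBip_eigenvalues_eq_le_neg A #A)
  have hbound := sum_card_filter_mul_sq_le (adjHerm (cayleyBip Γ A)).eigenvalues
    {(#A : ℝ), -(#A : ℝ)}
  rw [sum_pair (by linarith), sum_sq_cayleyBip_eigenvalues, neg_sq] at hbound
  refine ⟨?_, hk0⟩
  linarith [mul_le_mul_of_nonneg_right hk' (sq_nonneg (#A : ℝ)),
    mul_le_mul_of_nonneg_right hflip (sq_nonneg (#A : ℝ))]

theorem minNontrivRepDim_mul_secondLargest_sq_add_sq_le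
    (hμ : 0 < secondLargest ((cayleyBip Γ A).adjMatrix ℝ) (adjHerm (cayleyBip Γ A))) :
    (minNontrivRepDim Γ : ℝ) *
        secondLargest ((cayleyBip Γ A).adjMatrix ℝ) (adjHerm (cayleyBip Γ A)) ^ 2 + (#A : ℝ) ^ 2 ≤
      Fintype.card Γ * #A ∧ 0 < minNontrivRepDim Γ := by
  obtain ⟨i₀, hi₀⟩ := exists_eigenvalues_eq_secondLargest (adjHerm (cayleyBip Γ A))
  have hμA := hi₀ ▸ cayleyBip_eigenvalues_le A i₀
  rcases hμA.lt_or_eq with hlt | heq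
  · exact minNontrivRepDim_mul_sq_add_sq_le_of_lt A hμ hlt ⟨i₀, hi₀⟩
  have hA : (0 : ℝ) < #A := heq ▸ hμ
  have h2 : 2 ≤ #{i | (adjHerm (cayleyBip Γ A)).eigenvalues i = #A} := by
    have := Fintype.card_pos (α := Γ)
    convert two_le_card_filter_secondLargest_le (adjHerm (cayleyBip Γ A))
      (by rw [Fintype.card_sum]; omega) using 2
    ext i
    simp only [mem_filter, mem_univ, true_and, heq]
    exact ⟨fun h => h.ge, (cayleyBip_eigenvalues_le A i).antisymm⟩
  rw [heq]
  obtain ⟨hbound, hk0⟩ := minNontrivRepDim_add_one_mul_sq_le A hA h2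
  exact ⟨by linarith, hk0⟩

end CayleySpectrum

theorem stmt18_general (Γ : Type*) [Group Γ] [Fintype Γ] [DecidableEq Γ] (A : Finset Γ) :
    secondLargest ((cayleyBip Γ A).adjMatrix ℝ) (adjHerm (cayleyBip Γ A)) ≤
      Real.sqrt ((A.card : ℝ) * ((Fintype.card Γ : ℝ) - A.card) / (minNontrivRepDim Γ)) := by
  rcases le_or_gt (secondLargest ((cayleyBip Γ A).adjMatrix ℝ) (adjHerm (cayleyBip Γ A))) 0
    with hμ | hμ
  · exact hμ.trans (Real.sqrt_nonneg _)
  obtain ⟨hbound, hk⟩ := minNontrivRepDim_mul_secondLargest_sq_add_sq_le A hμ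
  refine Real.le_sqrt_of_sq_le ((le_div_iff₀ (by exact_mod_cast hk)).mpr ?_)
  linarith

/-- if `A ⊆ Γ` is product-free, then the second largest adjacency
eigenvalue `λ₂` of the bipartite Cayley graph `G_{Γ,A}` satisfies
`λ₂ ≤ √(|A|·(n − |A|)/k)`, where `n = |Γ|` and `k` is the minimum dimension of a
non-trivial complex representation of `Γ`. -/
theorem stmt18 (Γ : Type*) [Group Γ] [Fintype Γ] [DecidableEq Γ] (A : Finset Γ)
    (hpf : ∀ a ∈ A, ∀ b ∈ A, a * b ∉ A) :
    secondLargest ((cayleyBip Γ A).adjMatrix ℝ) (adjHerm (cayleyBip Γ A)) ≤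
      Real.sqrt ((A.card : ℝ) * ((Fintype.card Γ : ℝ) - A.card) / (minNontrivRepDim Γ)) :=
  stmt18_general Γ A
end
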